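/- Let A ∈ ℂ^{m×n×p} and W ∈ ℂ^{n×m×p} with rank_M(W *_M A) = rank_M(W) ≤ rank_M(A), and let X be an outer inverse of A with R_M(X) = R_M(W) and N_M(X) = N_M(W). Let γ ∈ ℂ and define Z₀ = γ·W and Z_{j+1} = Z_j *_M Σ_{k=0}^{18} (I_M − A *_M Z_j)^k. Then for every j ≥ 0, ‖mat(X − Z_{j+1})‖_F ≤ ‖mat(X)‖_F · ‖mat(A)‖_F^{19} · ‖mat(X − Z_j)‖_F^{19}; i.e., the iteration has (at least) nineteenth order of convergence to X. -/

import Mathlib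

open Matrix Finset

/-- A third-order tensor in `ℂ^{m×n×p}`, given by its `p` frontal slices. -/
abbrev Tensor (m n p : ℕ) := Fin p → Matrix (Fin m) (Fin n) ℂ

/-- The transform `Â = A ×₃ M` (mode-3 product with `M`). -/
noncomputable def hatT {m n p : ℕ} (M : Matrix (Fin p) (Fin p) ℂ) (A : Tensor m n p) :
    Tensor m n p :=
  fun l => ∑ s, M l s • A s

/-- `mat(A)`: the block-diagonal matrix whose blocks are frontal slices of `A ×₃ M`. -/
noncomputable def matT {m n p : ℕ} (M : Matrix (Fin p) (Fin p) ℂ) (A : Tensor m n p) :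
    Matrix (Fin m × Fin p) (Fin n × Fin p) ℂ :=
  Matrix.blockDiagonal (hatT M A)

/-- The M-product `A *_M B`, determined by `mat(A *_M B) = mat(A)·mat(B)`. -/
noncomputable def mprod {m n k p : ℕ} (M : Matrix (Fin p) (Fin p) ℂ)
    (A : Tensor m n p) (B : Tensor n k p) : Tensor m k p :=
  fun l => ∑ s, M⁻¹ l s • (hatT M A s * hatT M B s)

/-- The conjugate transpose `A^*`, determined by `mat(A^*) = mat(A)^*`. -/
noncomputable def mstar {m n p : ℕ} (M : Matrix (Fin p) (Fin p) ℂ) (A : Tensor m n p) :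
    Tensor n m p :=
  fun l => ∑ s, M⁻¹ l s • (hatT M A s)ᴴ

/-- The identity tensor `I_M ∈ ℂ^{m×m×p}`, determined by `mat(I_M) = I`. -/
noncomputable def idT {p : ℕ} (M : Matrix (Fin p) (Fin p) ℂ) (m : ℕ) : Tensor m m p :=
  fun l => ∑ s, M⁻¹ l s • (1 : Matrix (Fin m) (Fin m) ℂ)

/-- M-product powers of a square tensor. -/
noncomputable def mpow {m p : ℕ} (M : Matrix (Fin p) (Fin p) ℂ) (A : Tensor m m p) :
    ℕ → Tensor m m p
  | 0 => idT M m
  | k + 1 => mprod M A (mpow M A k)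

/-- `R_M(A)`: the column space of `mat(A)`. -/
noncomputable def rangeM {m n p : ℕ} (M : Matrix (Fin p) (Fin p) ℂ) (A : Tensor m n p) :
    Submodule ℂ (Fin m × Fin p → ℂ) :=
  LinearMap.range (matT M A).mulVecLin

/-- `N_M(A)`: the kernel of `mat(A)`. -/
noncomputable def kerM {m n p : ℕ} (M : Matrix (Fin p) (Fin p) ℂ) (A : Tensor m n p) :
    Submodule ℂ (Fin n × Fin p → ℂ) :=
  LinearMap.ker (matT M A).mulVecLin

/-- `rank_M(A) = rank(mat(A))`. -/
noncomputable def rankM {m n p : ℕ} (M : Matrix (Fin p) (Fin p) ℂ) (A : Tensor m n p) : ℕ :=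
  (matT M A).rank

/-- The first `s` lateral slices `Q(:,1:s,:)`. -/
def latSlice {n s p : ℕ} (hsn : s ≤ n) (Q : Tensor n n p) : Tensor n s p :=
  fun l => (Q l).submatrix id (Fin.castLE hsn)

/-- The first `s` horizontal slices `R(1:s,:,:)`. -/
def horSlice {n m s p : ℕ} (hsn : s ≤ n) (R : Tensor n m p) : Tensor s m p :=
  fun l => (R l).submatrix (Fin.castLE hsn) id

/-- Frobenius norm of a complex matrix. -/
noncomputable def frobNorm {α β : Type*} [Fintype α] [Fintype β] (X : Matrix α β ℂ) : ℝ :=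
  Real.sqrt (∑ i, ∑ j, ‖X i j‖ ^ 2)

/-!
Transported through `mat`, the M-product becomes the ordinary matrix product, so it suffices to
argue with the matrices `A`, `X` and `Z_j`. The range and kernel conditions give
`X A W = W = W A X`, and the identities `X A Z_j = Z_j = Z_j A X` persist along the iteration.
With them the geometric sum telescopes to `X - Z_{j+1} = X (1 - A Z_j)^19`. Splitting
`1 - A Z_j = (1 - A X) + A (X - Z_j)`, where `1 - A X` is annihilated from the left by both `X`
and `A (X - Z_j)`, turns this into `X - Z_{j+1} = X (A (X - Z_j))^19`, and submultiplicativity of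
the Frobenius norm concludes.
-/

section Transform

variable {m n k p : ℕ}

lemma hatT_hatT (M N : Matrix (Fin p) (Fin p) ℂ) (C : Tensor m n p) :
    hatT M (hatT N C) = hatT (M * N) C := by
  funext l
  simp only [hatT, Finset.smul_sum, smul_smul, Matrix.mul_apply, Finset.sum_smul]
  exact Finset.sum_comm

lemma hatT_one (C : Tensor m n p) : hatT 1 C = C := by
  funext l
  simp [hatT, Matrix.one_apply]

variable {M : Matrix (Fin p) (Fin p) ℂ}

lemma hatT_mprod (hM : IsUnit M.det) (A : Tensor m n p) (B : Tensor n k p) :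
    hatT M (mprod M A B) = fun l => hatT M A l * hatT M B l := by
  rw [show mprod M A B = hatT M⁻¹ (fun l => hatT M A l * hatT M B l) from rfl, hatT_hatT,
    Matrix.mul_nonsing_inv M hM, hatT_one]

lemma matT_mprod (hM : IsUnit M.det) (A : Tensor m n p) (B : Tensor n k p) :
    matT M (mprod M A B) = matT M A * matT M B := by
  rw [matT, hatT_mprod hM, matT, matT, Matrix.blockDiagonal_mul]

lemma matT_idT (hM : IsUnit M.det) : matT M (idT M m) = 1 := by
  rw [matT, show idT M m = hatT M⁻¹ 1 from rfl, hatT_hatT, Matrix.mul_nonsing_inv M hM,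
    hatT_one]
  exact Matrix.blockDiagonal_one

lemma matT_mpow (hM : IsUnit M.det) (A : Tensor m m p) (j : ℕ) :
    matT M (mpow M A j) = matT M A ^ j := by
  induction j with
  | zero => exact matT_idT hM
  | succ j ih => rw [mpow, matT_mprod hM, ih, pow_succ']

variable (M) in
noncomputable def matTLinearMap :
    Tensor m n p →ₗ[ℂ] Matrix (Fin m × Fin p) (Fin n × Fin p) ℂ where
  toFun := matT M
  map_add' A B := by
    rw [matT, matT, matT, ← Matrix.blockDiagonal_add]
    congr 1
    funext l
    simp [hatT, smul_add, Finset.sum_add_distrib]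
  map_smul' γ A := by
    rw [matT, matT, RingHom.id_apply, ← Matrix.blockDiagonal_smul]
    congr 1
    funext l
    simp [hatT, Finset.smul_sum, smul_comm γ]

lemma matT_sub (A B : Tensor m n p) : matT M (A - B) = matT M A - matT M B :=
  map_sub (matTLinearMap M) A B

lemma matT_smul (γ : ℂ) (A : Tensor m n p) : matT M (γ • A) = γ • matT M A :=
  map_smul (matTLinearMap M) γ A

lemma matT_sum {ι : Type*} (s : Finset ι) (F : ι → Tensor m n p) :
    matT M (∑ i ∈ s, F i) = ∑ i ∈ s, matT M (F i) :=
  map_sum (matTLinearMap M) F s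

end Transform

section MatrixIdentities

variable {I J R : Type*} [Fintype J] [DecidableEq J] [Ring R]

lemma mul_one_sub_mul_pow [Fintype I] [DecidableEq I] (Z : Matrix I J R) (A : Matrix J I R) (k : ℕ) :
    Z * (1 - A * Z) ^ k = (1 - Z * A) ^ k * Z := by
  induction k with
  | zero => simp
  | succ k ih =>
    have hZ : Z * (1 - A * Z) = (1 - Z * A) * Z := by
      rw [Matrix.mul_sub, Matrix.sub_mul, Matrix.mul_one, Matrix.one_mul, Matrix.mul_assoc]
    rw [pow_succ', ← Matrix.mul_assoc, hZ, Matrix.mul_assoc, ih, ← Matrix.mul_assoc, ← pow_succ']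

lemma mul_add_pow_of_mul_eq_zero {Y : Matrix I J R} {P Q : Matrix J J R}
    (hYP : Y * P = 0) (hQP : Q * P = 0) (k : ℕ) : Y * (P + Q) ^ k = Y * Q ^ k := by
  have hYQP : ∀ k, Y * Q ^ k * P = 0
    | 0 => by rwa [pow_zero, Matrix.mul_one]
    | k + 1 => by rw [pow_succ, Matrix.mul_assoc, Matrix.mul_assoc, hQP, Matrix.mul_zero,
        Matrix.mul_zero]
  induction k with
  | zero => rfl
  | succ k ih =>
    rw [pow_succ, ← Matrix.mul_assoc, ih, Matrix.mul_add, hYQP, zero_add, pow_succ,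
      Matrix.mul_assoc]


variable [Fintype I] {A : Matrix J I R} {X Z : Matrix I J R}

lemma sub_mul_geom_sum_eq (hXAX : X * A * X = X) (hXAZ : X * A * Z = Z) (hZAX : Z * A * X = Z)
    (K : ℕ) : X - Z * ∑ k ∈ Finset.range K, (1 - A * Z) ^ k = X * (A * (X - Z)) ^ K := by
  have htelescope : X - Z * ∑ k ∈ Finset.range K, (1 - A * Z) ^ k = X * (1 - A * Z) ^ K := by
    have hgeom := mul_neg_geom_sum (1 - A * Z) K
    rw [sub_sub_cancel] at hgeom
    calc X - Z * ∑ k ∈ Finset.range K, (1 - A * Z) ^ k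
        = X - X * (A * Z * ∑ k ∈ Finset.range K, (1 - A * Z) ^ k) := by
          rw [← Matrix.mul_assoc, ← Matrix.mul_assoc, hXAZ]
      _ = X * (1 - A * Z) ^ K := by rw [hgeom, Matrix.mul_sub, Matrix.mul_one, sub_sub_cancel]
  have hsplit : 1 - A * Z = (1 - A * X) + A * (X - Z) := by
    rw [Matrix.mul_sub]; abel
  refine htelescope.trans (hsplit ▸ mul_add_pow_of_mul_eq_zero ?_ ?_ K)
  · rw [Matrix.mul_sub, Matrix.mul_one, ← Matrix.mul_assoc, hXAX, sub_self]
  · have hE : (X - Z) * A * X = X - Z := by rw [Matrix.sub_mul, Matrix.sub_mul, hXAX, hZAX]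
    rw [Matrix.mul_sub, Matrix.mul_one, Matrix.mul_assoc, ← Matrix.mul_assoc (X - Z), hE,
      sub_self]


lemma hyperpower_invariant [DecidableEq I] (K : ℕ) {Z : ℕ → Matrix I J R}
    (hZ : ∀ j, Z (j + 1) = Z j * ∑ k ∈ Finset.range K, (1 - A * Z j) ^ k)
    (hXAZ : X * A * Z 0 = Z 0) (hZAX : Z 0 * A * X = Z 0) :
    ∀ j, X * A * Z j = Z j ∧ Z j * A * X = Z j := by
  intro j
  induction j with
  | zero => exact ⟨hXAZ, hZAX⟩
  | succ j ih =>
    have hshift : Z j * ∑ k ∈ Finset.range K, (1 - A * Z j) ^ k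
        = (∑ k ∈ Finset.range K, (1 - Z j * A) ^ k) * Z j := by
      rw [Matrix.mul_sum, Matrix.sum_mul]
      exact Finset.sum_congr rfl fun k _ => mul_one_sub_mul_pow (Z j) A k
    rw [hZ j]
    constructor
    · rw [← Matrix.mul_assoc, ih.1]
    · rw [hshift, Matrix.mul_assoc _ (Z j), Matrix.mul_assoc, ih.2]

end MatrixIdentities

section RangeKernel

variable {I J R : Type*} [Fintype I] [Fintype J] [CommRing R] {A : Matrix J I R}
  {X Z : Matrix I J R}

lemma mul_mul_eq_of_range_le (hXAX : X * A * X = X)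
    (h : LinearMap.range Z.mulVecLin ≤ LinearMap.range X.mulVecLin) : X * A * Z = Z := by
  refine Matrix.ext_iff_mulVec.mpr fun v => ?_
  obtain ⟨w, hw⟩ := h ⟨v, rfl⟩
  simp only [Matrix.mulVecLin_apply] at hw
  rw [← Matrix.mulVec_mulVec, ← hw, Matrix.mulVec_mulVec, hXAX]

lemma mul_mul_eq_of_ker_le (hXAX : X * A * X = X)
    (h : LinearMap.ker X.mulVecLin ≤ LinearMap.ker Z.mulVecLin) : Z * A * X = Z := by
  refine Matrix.ext_iff_mulVec.mpr fun v => ?_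
  have hv : (A * X) *ᵥ v - v ∈ LinearMap.ker X.mulVecLin := by
    simp [Matrix.mulVec_sub, Matrix.mulVec_mulVec, ← Matrix.mul_assoc, hXAX]
  have hZv := h hv
  rw [LinearMap.mem_ker, Matrix.mulVecLin_apply, Matrix.mulVec_sub, sub_eq_zero] at hZv
  rw [Matrix.mul_assoc, ← Matrix.mulVec_mulVec, hZv]

end RangeKernel

section Frobenius

attribute [local instance] Matrix.frobeniusSeminormedAddCommGroup

lemma frobNorm_eq {α β : Type*} [Fintype α] [Fintype β] (X : Matrix α β ℂ) :
    frobNorm X = ‖X‖ := by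
  rw [frobNorm, Matrix.frobenius_norm_def, ← Real.sqrt_eq_rpow]
  simp only [Real.rpow_two]

variable {I J K : Type*} [Fintype I] [Fintype J] [Fintype K] {𝕜 : Type*} [RCLike 𝕜]

lemma frobenius_norm_mul_pow_le [DecidableEq J] (X : Matrix I J 𝕜) (B : Matrix J J 𝕜) (k : ℕ) :
    ‖X * B ^ k‖ ≤ ‖X‖ * ‖B‖ ^ k := by
  induction k with
  | zero => simp
  | succ k ih =>
    calc ‖X * B ^ (k + 1)‖ = ‖X * B ^ k * B‖ := by rw [pow_succ, Matrix.mul_assoc]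
      _ ≤ ‖X * B ^ k‖ * ‖B‖ := Matrix.frobenius_norm_mul _ _
      _ ≤ ‖X‖ * ‖B‖ ^ k * ‖B‖ := by gcongr
      _ = ‖X‖ * ‖B‖ ^ (k + 1) := by ring

lemma frobenius_norm_mul_mul_pow_le [DecidableEq J] (X : Matrix I J 𝕜) (A : Matrix J K 𝕜)
    (E : Matrix K J 𝕜) (k : ℕ) : ‖X * (A * E) ^ k‖ ≤ ‖X‖ * ‖A‖ ^ k * ‖E‖ ^ k :=
  calc ‖X * (A * E) ^ k‖ ≤ ‖X‖ * ‖A * E‖ ^ k := frobenius_norm_mul_pow_le X (A * E) k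
    _ ≤ ‖X‖ * (‖A‖ * ‖E‖) ^ k := by gcongr; exact Matrix.frobenius_norm_mul A E
    _ = ‖X‖ * ‖A‖ ^ k * ‖E‖ ^ k := by rw [mul_pow, mul_assoc]

theorem hpi19_nineteenth_order_general {m n p : ℕ}
    (M : Matrix (Fin p) (Fin p) ℂ) (hM : IsUnit M.det)
    (A : Tensor m n p) (W X : Tensor n m p)
    (hout : mprod M X (mprod M A X) = X)
    (hRX : rangeM M X = rangeM M W) (hNX : kerM M X = kerM M W)
    (γ : ℂ) (Z : ℕ → Tensor n m p)
    (hZ0 : Z 0 = γ • W)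
    (hZ : ∀ j, Z (j + 1) =
      mprod M (Z j) (∑ k ∈ Finset.range 19, mpow M (idT M m - mprod M A (Z j)) k)) :
    ∀ j, frobNorm (matT M (X - Z (j + 1))) ≤
      frobNorm (matT M X) * frobNorm (matT M A) ^ 19 *
        frobNorm (matT M (X - Z j)) ^ 19 := by
  have hXAX : matT M X * matT M A * matT M X = matT M X := by
    simpa only [matT_mprod hM, Matrix.mul_assoc] using congrArg (matT M) hout
  have hstep : ∀ j, matT M (Z (j + 1)) =
      matT M (Z j) * ∑ k ∈ Finset.range 19, (1 - matT M A * matT M (Z j)) ^ k := by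
    intro j
    simp only [hZ j, matT_mprod hM, matT_sum, matT_mpow hM, matT_sub, matT_idT hM]
  have hinv := hyperpower_invariant (Z := fun j => matT M (Z j)) 19 hstep
    (by rw [hZ0, matT_smul, Matrix.mul_smul, mul_mul_eq_of_range_le hXAX hRX.ge])
    (by rw [hZ0, matT_smul, Matrix.smul_mul, Matrix.smul_mul, mul_mul_eq_of_ker_le hXAX hNX.le])
  intro j
  obtain ⟨hXAZ, hZAX⟩ := hinv j
  simp only [frobNorm_eq, matT_sub]
  rw [hstep j, sub_mul_geom_sum_eq hXAX hXAZ hZAX]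
  exact frobenius_norm_mul_mul_pow_le _ _ _ 19

/-- Nineteenth order of convergence of M-HPI19: the error at step `j+1` is bounded by a
constant times the 19th power of the error at step `j`. -/
theorem hpi19_nineteenth_order {m n p : ℕ}
    (M : Matrix (Fin p) (Fin p) ℂ) (hM : IsUnit M.det)
    (A : Tensor m n p) (W X : Tensor n m p)
    (hr1 : rankM M (mprod M W A) = rankM M W) (hr2 : rankM M W ≤ rankM M A)
    (hout : mprod M X (mprod M A X) = X)
    (hRX : rangeM M X = rangeM M W) (hNX : kerM M X = kerM M W)
    (γ : ℂ) (Z : ℕ → Tensor n m p)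
    (hZ0 : Z 0 = γ • W)
    (hZ : ∀ j, Z (j + 1) =
      mprod M (Z j) (∑ k ∈ Finset.range 19, mpow M (idT M m - mprod M A (Z j)) k)) :
    ∀ j, frobNorm (matT M (X - Z (j + 1))) ≤
      frobNorm (matT M X) * frobNorm (matT M A) ^ 19 *
        frobNorm (matT M (X - Z j)) ^ 19 :=
  hpi19_nineteenth_order_general M hM A W X hout hRX hNX γ Z hZ0 hZ

end Frobenius
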